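/- Let S ⊆ (Fin 3)^d be an ε-sparse set, N = |S|, and let C ⊆ (Fin 3)^S be a set of words indexed by S. For x ∈ C define S_x = {(α, x_α) : α ∈ S} ⊆ (Fin 3)^{d+1} (appending x_α as the last coordinate). Then each S_x is (ε/2)-sparse in (Fin 3)^{d+1}. -/

import Mathlib

/-!
Appending one coordinate does not decrease Hamming distances, so distinct points of `S_x` stay
at distance at least `ε d ≥ ε (d + 1) / 2` (when `d = 0`, `S` has at most one point). If `γ`
isolates `α` in `S` (it is at full distance `d` from `α` and from no other point), then
`(γ, c)` with any `c ≠ x_α` isolates `(α, x_α)` in `S_x`: a point `(β, x_β)` at full distance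
`d + 1` from it has `β` at full distance `d` from `γ`, hence `β = α`.
-/

/-- A set `S ⊆ (Fin 3)^m` is `η`-sparse if pairwise Hamming distances are at least `ηm`
and every `α ∈ S` is the unique element of `S` at distance `m` from some index `γ`. -/
def EpsSparse {m : ℕ} (η : ℝ) (S : Finset (Fin m → Fin 3)) : Prop :=
  (∀ α ∈ S, ∀ β ∈ S, α ≠ β → η * m ≤ (hammingDist α β : ℝ)) ∧
  ∀ α ∈ S, ∃ γ : Fin m → Fin 3, S.filter (fun β => hammingDist γ β = m) = {α}

section Snoc

variable {β : Type*} [DecidableEq β] {d : ℕ}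

theorem hammingDist_snoc (a b : Fin d → β) (c c' : β) :
    hammingDist (Fin.snoc a c : Fin (d + 1) → β) (Fin.snoc b c') =
      hammingDist a b + if c = c' then 0 else 1 := by
  simp only [hammingDist, Finset.card_filter, Fin.sum_univ_castSucc, Fin.snoc_castSucc,
    Fin.snoc_last, ne_eq, ite_not]

theorem hammingDist_le_hammingDist_snoc (a b : Fin d → β) (c c' : β) :
    hammingDist a b ≤ hammingDist (Fin.snoc a c : Fin (d + 1) → β) (Fin.snoc b c') := by
  rw [hammingDist_snoc]
  exact Nat.le_add_right _ _

theorem hammingDist_snoc_eq_succ_iff {a b : Fin d → β} {c c' : β} :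
    hammingDist (Fin.snoc a c : Fin (d + 1) → β) (Fin.snoc b c') = d + 1 ↔
      hammingDist a b = d ∧ c ≠ c' := by
  have hle : hammingDist a b ≤ d := by
    simpa using hammingDist_le_card_fintype (x := a) (y := b)
  rw [hammingDist_snoc]
  by_cases h : c = c'
  · simp only [h, ↓reduceIte, add_zero, ne_eq, not_true_eq_false, and_false, iff_false]
    omega
  · simp only [h, ↓reduceIte, Nat.add_right_cancel_iff, ne_eq, not_false_eq_true, and_true]

theorem separated_image_snoc {ε : ℝ} (hε : 0 ≤ ε) {S : Finset (Fin d → β)}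
    (hS : ∀ a ∈ S, ∀ b ∈ S, a ≠ b → ε * d ≤ (hammingDist a b : ℝ)) (x : (Fin d → β) → β) :
    ∀ a ∈ S.image (fun α => (Fin.snoc α (x α) : Fin (d + 1) → β)),
      ∀ b ∈ S.image (fun α => (Fin.snoc α (x α) : Fin (d + 1) → β)),
      a ≠ b → ε / 2 * ↑(d + 1) ≤ (hammingDist a b : ℝ) := by
  simp only [Finset.mem_image]
  rintro _ ⟨a, ha, rfl⟩ _ ⟨b, hb, rfl⟩ hne
  have hab : a ≠ b := by rintro rfl; exact hne rfl
  have hd : 1 ≤ d := Nat.one_le_iff_ne_zero.mpr <| by rintro rfl; exact hab (Subsingleton.elim a b)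
  have hd' : (1 : ℝ) ≤ d := by exact_mod_cast hd
  calc ε / 2 * ↑(d + 1) ≤ ε * d := by push_cast; nlinarith
    _ ≤ hammingDist a b := hS a ha b hb hab
    _ ≤ _ := by exact_mod_cast hammingDist_le_hammingDist_snoc a b (x a) (x b)

theorem filter_image_snoc_eq_singleton {S : Finset (Fin d → β)} {α γ : Fin d → β}
    (hγ : S.filter (fun b => hammingDist γ b = d) = {α}) (x : (Fin d → β) → β) {c : β}
    (hc : c ≠ x α) :
    (S.image (fun a => (Fin.snoc a (x a) : Fin (d + 1) → β))).filter
        (fun b => hammingDist (Fin.snoc γ c : Fin (d + 1) → β) b = d + 1) =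
      {Fin.snoc α (x α)} := by
  have hα : α ∈ S ∧ hammingDist γ α = d := Finset.mem_filter.mp (hγ ▸ Finset.mem_singleton_self α)
  ext b'
  simp only [Finset.mem_filter, Finset.mem_image, Finset.mem_singleton]
  constructor
  · rintro ⟨⟨b, hb, rfl⟩, hdist⟩
    have hbα : b ∈ S.filter (fun b => hammingDist γ b = d) :=
      Finset.mem_filter.mpr ⟨hb, (hammingDist_snoc_eq_succ_iff.mp hdist).1⟩
    rw [hγ, Finset.mem_singleton] at hbα
    rw [hbα]
  · rintro rfl
    exact ⟨⟨α, hα.1, rfl⟩, hammingDist_snoc_eq_succ_iff.mpr ⟨hα.2, hc⟩⟩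

end Snoc

theorem appended_set_sparse_general {d : ℕ} (ε : ℝ) (hε0 : 0 < ε)
    (S : Finset (Fin d → Fin 3)) (hS : EpsSparse ε S)
    (x : (Fin d → Fin 3) → Fin 3) :
    EpsSparse (ε / 2) (S.image (fun α => Fin.snoc α (x α))) := by
  obtain ⟨hsep, hiso⟩ := hS
  refine ⟨separated_image_snoc hε0.le hsep x, ?_⟩
  simp only [Finset.forall_mem_image]
  intro α hα
  obtain ⟨γ, hγ⟩ := hiso α hα
  obtain ⟨c, hc⟩ := exists_ne (x α)
  exact ⟨Fin.snoc γ c, filter_image_snoc_eq_singleton hγ x hc⟩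

/-- Appending to each element `α` of an `ε`-sparse set `S ⊆ (Fin 3)^d` a last coordinate
`x α` yields an `(ε/2)`-sparse set in `(Fin 3)^{d+1}`. -/
theorem appended_set_sparse {d : ℕ} (ε : ℝ) (hε0 : 0 < ε) (hε1 : ε ≤ 1)
    (S : Finset (Fin d → Fin 3)) (hS : EpsSparse ε S)
    (x : (Fin d → Fin 3) → Fin 3) :
    EpsSparse (ε / 2) (S.image (fun α => Fin.snoc α (x α))) :=
  appended_set_sparse_general ε hε0 S hS x
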